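/- arXiv:2601.13555 — 2 statements merged into one kernel-verified Lean document; each statement's English description precedes it below -/
import Mathlib

section
/- Let ζ ∈ ℝ^I satisfy ζ_i > 0 for all i ∈ I. Then every ζ-semistable framed quiver representation (B, i, j) is ζ-stable. Equivalently, (B, i, j) is ζ-semistable if and only if the only B-invariant I-graded subspace S ⊆ Ker j is S = 0. -/
/-!
When every ζ_k is positive, `ζ · dim` is strictly monotone on I-graded subspaces. Hence
condition (1) of semistability says precisely that every B-invariant S ⊆ Ker j is zero, which
also makes the strict form of (1) vacuous, while condition (2) holds for every T ⊆ V,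
strictly unless T = V, whatever B and i are.
-/

open Module

section WeightedDimension

variable {K ι : Type*} [DivisionRing K] [Fintype ι] {V : ι → Type*}
  [∀ k, AddCommGroup (V k)] [∀ k, Module K (V k)] [∀ k, FiniteDimensional K (V k)]
  {ζ : ι → ℝ}

theorem sum_mul_finrank_nonpos_iff (hζ : ∀ k, 0 < ζ k) (S : ∀ k, Submodule K (V k)) :
    ∑ k, ζ k * (finrank K (S k) : ℝ) ≤ 0 ↔ ∀ k, S k = ⊥ := by
  have hnonneg : ∀ k ∈ Finset.univ, 0 ≤ ζ k * (finrank K (S k) : ℝ) :=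
    fun k _ => mul_nonneg (hζ k).le (Nat.cast_nonneg _)
  rw [(Finset.sum_nonneg hnonneg).ge_iff_eq', Finset.sum_eq_zero_iff_of_nonneg hnonneg]
  simp [(hζ _).ne']

theorem sum_mul_finrank_le_sum_mul_finrank (hζ : ∀ k, 0 ≤ ζ k) (T : ∀ k, Submodule K (V k)) :
    ∑ k, ζ k * (finrank K (T k) : ℝ) ≤ ∑ k, ζ k * (finrank K (V k) : ℝ) :=
  Finset.sum_le_sum fun k _ =>
    mul_le_mul_of_nonneg_left (Nat.cast_le.mpr (Submodule.finrank_le (T k))) (hζ k)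

theorem sum_mul_finrank_lt_sum_mul_finrank (hζ : ∀ k, 0 < ζ k) (T : ∀ k, Submodule K (V k))
    (hT : ¬ ∀ k, T k = ⊤) :
    ∑ k, ζ k * (finrank K (T k) : ℝ) < ∑ k, ζ k * (finrank K (V k) : ℝ) := by
  obtain ⟨k₀, hk₀⟩ := not_forall.mp hT
  exact Finset.sum_lt_sum
    (fun k _ => mul_le_mul_of_nonneg_left
      (Nat.cast_le.mpr (Submodule.finrank_le (T k))) (hζ k).le)
    ⟨k₀, Finset.mem_univ k₀,
      mul_lt_mul_of_pos_left (Nat.cast_lt.mpr (Submodule.finrank_lt hk₀)) (hζ k₀)⟩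

end WeightedDimension

/-- For a positive stability parameter ζ, every ζ-semistable framed
quiver representation is ζ-stable; equivalently, (B,i,j) is ζ-semistable iff the
only B-invariant I-graded subspace contained in Ker j is zero. -/
theorem stmt_1 {I A : Type} [Fintype I] (t h : A → I) (V W : I → Type)
    [∀ k, AddCommGroup (V k)] [∀ k, Module ℂ (V k)] [∀ k, FiniteDimensional ℂ (V k)]
    [∀ k, AddCommGroup (W k)] [∀ k, Module ℂ (W k)]
    (B : ∀ a : A, V (t a) →ₗ[ℂ] V (h a))
    (i : ∀ k, W k →ₗ[ℂ] V k) (j : ∀ k, V k →ₗ[ℂ] W k)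
    (ζ : I → ℝ) (hζ : ∀ k, 0 < ζ k) :
    (((∀ S : ∀ k, Submodule ℂ (V k),
          (∀ a, (S (t a)).map (B a) ≤ S (h a)) →
          (∀ k, S k ≤ LinearMap.ker (j k)) →
          ∑ k : I, ζ k * (Module.finrank ℂ (S k) : ℝ) ≤ 0) ∧
      (∀ T : ∀ k, Submodule ℂ (V k),
          (∀ a, (T (t a)).map (B a) ≤ T (h a)) →
          (∀ k, LinearMap.range (i k) ≤ T k) →
          ∑ k : I, ζ k * (Module.finrank ℂ (T k) : ℝ)
            ≤ ∑ k : I, ζ k * (Module.finrank ℂ (V k) : ℝ))) →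
      ((∀ S : ∀ k, Submodule ℂ (V k),
          (∀ a, (S (t a)).map (B a) ≤ S (h a)) →
          (∀ k, S k ≤ LinearMap.ker (j k)) →
          (¬ ∀ k, S k = ⊥) →
          ∑ k : I, ζ k * (Module.finrank ℂ (S k) : ℝ) < 0) ∧
       (∀ T : ∀ k, Submodule ℂ (V k),
          (∀ a, (T (t a)).map (B a) ≤ T (h a)) →
          (∀ k, LinearMap.range (i k) ≤ T k) →
          (¬ ∀ k, T k = ⊤) →
          ∑ k : I, ζ k * (Module.finrank ℂ (T k) : ℝ)
            < ∑ k : I, ζ k * (Module.finrank ℂ (V k) : ℝ)))) ∧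
    (((∀ S : ∀ k, Submodule ℂ (V k),
          (∀ a, (S (t a)).map (B a) ≤ S (h a)) →
          (∀ k, S k ≤ LinearMap.ker (j k)) →
          ∑ k : I, ζ k * (Module.finrank ℂ (S k) : ℝ) ≤ 0) ∧
      (∀ T : ∀ k, Submodule ℂ (V k),
          (∀ a, (T (t a)).map (B a) ≤ T (h a)) →
          (∀ k, LinearMap.range (i k) ≤ T k) →
          ∑ k : I, ζ k * (Module.finrank ℂ (T k) : ℝ)
            ≤ ∑ k : I, ζ k * (Module.finrank ℂ (V k) : ℝ))) ↔
      (∀ S : ∀ k, Submodule ℂ (V k),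
          (∀ a, (S (t a)).map (B a) ≤ S (h a)) →
          (∀ k, S k ≤ LinearMap.ker (j k)) →
          ∀ k, S k = ⊥)) := by
  have hss_iff := sum_mul_finrank_nonpos_iff (K := ℂ) (V := V) hζ
  refine ⟨fun ⟨hS, _⟩ => ⟨?_, ?_⟩, ⟨fun ⟨hS, _⟩ S hB hj => ?_, fun hS => ⟨?_, ?_⟩⟩⟩
  · exact fun S hB hj hne => absurd ((hss_iff S).mp (hS S hB hj)) hne
  · exact fun T _ _ hT => sum_mul_finrank_lt_sum_mul_finrank hζ T hT
  · exact (hss_iff S).mp (hS S hB hj)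
  · exact fun S hB hj => (hss_iff S).mpr (hS S hB hj)
  · exact fun T _ _ => sum_mul_finrank_le_sum_mul_finrank (fun k => (hζ k).le) T
end

section
/- Let (B¹, i¹, j¹) be a framed representation and (B², i², j²) a stable framed representation (the only B²-invariant I-graded subspace of Ker j² is zero). If (ξ₁, d) and (ξ₂, d) are two framed morphisms from (B¹, i¹, j¹) to (B², i², j²) with the same framing component d, then ξ₁ = ξ₂. Consequently, the linear map from the space of framed morphisms to ⊕_k Hom(W_k, W_k) sending (ξ, d) to d is injective; when each W_k is at most one-dimensional, the space of framed morphisms has dimension at most 1. -/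
/-- Two framed morphisms into a stable framed representation with the
same framing component coincide; hence the map (ξ, d) ↦ d on framed morphisms is
injective. -/
theorem stmt_4 {I A : Type} (t h : A → I) (V1 V2 W : I → Type)
    [∀ k, AddCommGroup (V1 k)] [∀ k, Module ℂ (V1 k)]
    [∀ k, AddCommGroup (V2 k)] [∀ k, Module ℂ (V2 k)]
    [∀ k, AddCommGroup (W k)] [∀ k, Module ℂ (W k)]
    (B1 : ∀ a : A, V1 (t a) →ₗ[ℂ] V1 (h a))
    (B2 : ∀ a : A, V2 (t a) →ₗ[ℂ] V2 (h a))
    (i1 : ∀ k, W k →ₗ[ℂ] V1 k) (j1 : ∀ k, V1 k →ₗ[ℂ] W k)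
    (i2 : ∀ k, W k →ₗ[ℂ] V2 k) (j2 : ∀ k, V2 k →ₗ[ℂ] W k)
    (hstab : ∀ S : ∀ k, Submodule ℂ (V2 k),
        (∀ a, (S (t a)).map (B2 a) ≤ S (h a)) →
        (∀ k, S k ≤ LinearMap.ker (j2 k)) → ∀ k, S k = ⊥)
    (ξ₁ ξ₂ : ∀ k, V1 k →ₗ[ℂ] V2 k) (d : ∀ k, W k →ₗ[ℂ] W k)
    (hint₁ : ∀ a, B2 a ∘ₗ ξ₁ (t a) = ξ₁ (h a) ∘ₗ B1 a)
    (hj₁ : ∀ k, d k ∘ₗ j1 k = j2 k ∘ₗ ξ₁ k)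
    (hi₁ : ∀ k, ξ₁ k ∘ₗ i1 k = i2 k ∘ₗ d k)
    (hint₂ : ∀ a, B2 a ∘ₗ ξ₂ (t a) = ξ₂ (h a) ∘ₗ B1 a)
    (hj₂ : ∀ k, d k ∘ₗ j1 k = j2 k ∘ₗ ξ₂ k)
    (hi₂ : ∀ k, ξ₂ k ∘ₗ i1 k = i2 k ∘ₗ d k) :
    ∀ k, ξ₁ k = ξ₂ k := by
  set η : ∀ k, V1 k →ₗ[ℂ] V2 k := fun k => ξ₁ k - ξ₂ k with hη
  have hrange : ∀ k, LinearMap.range (η k) = ⊥ := by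
    apply hstab
    · intro a
      rintro x ⟨y, ⟨v, rfl⟩, rfl⟩
      refine ⟨B1 a v, ?_⟩
      show η (h a) (B1 a v) = B2 a (η (t a) v)
      have h1 := congrFun (congrArg DFunLike.coe (hint₁ a)) v
      have h2 := congrFun (congrArg DFunLike.coe (hint₂ a)) v
      simp only [LinearMap.comp_apply] at h1 h2
      simp [hη, h1, h2]
    · intro k
      rintro x ⟨v, rfl⟩
      have h1 := congrFun (congrArg DFunLike.coe (hj₁ k)) v
      have h2 := congrFun (congrArg DFunLike.coe (hj₂ k)) v
      simp only [LinearMap.comp_apply] at h1 h2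
      simp [hη, LinearMap.mem_ker, ← h1, ← h2]
  intro k
  have h0 : ξ₁ k - ξ₂ k = 0 := LinearMap.range_eq_bot.mp (hrange k)
  exact sub_eq_zero.mp h0
end
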